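/- arXiv:2603.17097 — 2 statements merged into one kernel-verified Lean document; each statement's English description precedes it below -/
import Mathlib

section
/- Let φ : ℝ≥0 × ℝⁿ → ℝⁿ be a flow satisfying the semigroup property φ(θ, φ(t, x)) = φ(t+θ, x) and φ(0,x) = x. Let C_p ⊆ ℝⁿ and S_b ⊆ ℝⁿ be sets such that S_b ⊆ C_p and S_b is forward invariant under φ (i.e., x ∈ S_b implies φ(t,x) ∈ S_b for all t ≥ 0). Fix T > 0 and define S = {x : φ(θ,x) ∈ C_p for all θ ∈ [0,T], and φ(T,x) ∈ S_b}. Then S is forward invariant under φ: if x₀ ∈ S then φ(t, x₀) ∈ S for all t ≥ 0. -/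
theorem stmt_0 {n : ℕ} (φ : ℝ → (Fin n → ℝ) → (Fin n → ℝ))
    (h0 : ∀ x, φ 0 x = x)
    (hsemi : ∀ t θ : ℝ, 0 ≤ t → 0 ≤ θ → ∀ x, φ θ (φ t x) = φ (t + θ) x)
    (Cp Sb : Set (Fin n → ℝ)) (hSbC : Sb ⊆ Cp)
    (hSbInv : ∀ x ∈ Sb, ∀ t : ℝ, 0 ≤ t → φ t x ∈ Sb)
    (T : ℝ) (hT : 0 < T)
    (S : Set (Fin n → ℝ))
    (hS : S = {x | (∀ θ ∈ Set.Icc (0:ℝ) T, φ θ x ∈ Cp) ∧ φ T x ∈ Sb}) :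
    ∀ x₀ ∈ S, ∀ t : ℝ, 0 ≤ t → φ t x₀ ∈ S := by
  subst hS
  rintro x₀ ⟨hC, hB⟩ t ht
  constructor
  · rintro θ ⟨hθ0, hθT⟩
    rw [hsemi t θ ht hθ0]
    by_cases h : t + θ ≤ T
    · exact hC (t + θ) ⟨by linarith, h⟩
    · push_neg at h
      have : φ (t + θ) x₀ = φ (t + θ - T) (φ T x₀) := by
        rw [hsemi T (t + θ - T) hT.le (by linarith)]
        ring_nf
      rw [this]
      exact hSbC (hSbInv _ hB _ (by linarith))
  · rw [hsemi t T ht hT.le]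
    have : φ (t + T) x₀ = φ t (φ T x₀) := by
      rw [hsemi T t hT.le ht, add_comm]
    rw [this]
    exact hSbInv _ hB _ ht
end

section
/- Let φ : ℝ≥0 × ℝⁿ → ℝⁿ be a flow with φ(0,x)=x and semigroup property, let H : ℝⁿ × ℝᵐ → ℝ, k_b : ℝⁿ → ℝᵐ, h(x) = H(x, k_b(x)), h_b : ℝⁿ → ℝ, S_b = {h_b ≥ 0}, C_p = {h ≥ 0}. Assume S_b ⊆ C_p and S_b is forward invariant under φ. Let T > 0 and S = {x : h(φ(θ,x)) ≥ 0 for all θ ∈ [0,T], and h_b(φ(T,x)) ≥ 0}. Then for every x₀ ∈ S and every t ≥ 0: (i) φ(t, x₀) ∈ S, and (ii) H(φ(t,x₀), k_b(φ(t,x₀))) ≥ 0, i.e., the trajectory under the backup controller satisfies the mixed state-input constraint for all time. -/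
theorem stmt_10 {n m : ℕ}
    (φ : ℝ → (Fin n → ℝ) → (Fin n → ℝ))
    (h0 : ∀ x, φ 0 x = x)
    (hsemi : ∀ t θ : ℝ, 0 ≤ t → 0 ≤ θ → ∀ x, φ θ (φ t x) = φ (t + θ) x)
    (H : (Fin n → ℝ) × (Fin m → ℝ) → ℝ) (kb : (Fin n → ℝ) → (Fin m → ℝ))
    (h : (Fin n → ℝ) → ℝ) (hh : h = fun x => H (x, kb x))
    (hb : (Fin n → ℝ) → ℝ)
    (Sb : Set (Fin n → ℝ)) (hSb : Sb = {x | 0 ≤ hb x})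
    (Cp : Set (Fin n → ℝ)) (hCp : Cp = {x | 0 ≤ h x})
    (hSbC : Sb ⊆ Cp)
    (hSbInv : ∀ x ∈ Sb, ∀ t : ℝ, 0 ≤ t → φ t x ∈ Sb)
    (T : ℝ) (hT : 0 < T)
    (S : Set (Fin n → ℝ))
    (hS : S = {x | (∀ θ ∈ Set.Icc (0:ℝ) T, 0 ≤ h (φ θ x)) ∧ 0 ≤ hb (φ T x)}) :
    ∀ x₀ ∈ S, ∀ t : ℝ, 0 ≤ t →
      φ t x₀ ∈ S ∧ 0 ≤ H (φ t x₀, kb (φ t x₀)) := by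
  subst hS hSb hCp
  intro x₀ hx₀ t ht
  obtain ⟨h1, h2⟩ := hx₀
  -- key: any point φ s x₀ with s ≥ T is in Sb hence Cp
  have key : ∀ s : ℝ, T ≤ s → 0 ≤ hb (φ s x₀) := by
    intro s hs
    have hsT : 0 ≤ s - T := by linarith
    have := hSbInv (φ T x₀) h2 (s - T) hsT
    rw [hsemi T (s - T) (le_of_lt hT) hsT] at this
    simpa [add_sub_cancel] using this
  have hgood : ∀ s : ℝ, 0 ≤ s → 0 ≤ h (φ s x₀) := by
    intro s hs
    rcases le_or_gt s T with hsT | hsT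
    · exact h1 s ⟨hs, hsT⟩
    · exact hSbC (key s hsT.le)
  refine ⟨⟨?_, ?_⟩, ?_⟩
  · intro θ hθ
    rw [hsemi t θ ht hθ.1]
    exact hgood (t + θ) (by linarith [hθ.1])
  · rw [hsemi t T ht hT.le]
    exact key (t + T) (by linarith)
  · simpa [hh] using hgood t ht
end
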